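/- arXiv:1408.4071 — 4 statements merged into one kernel-verified Lean document; each statement's English description precedes it below -/
import Mathlib

section
/- Let R be a local ring with residue field k, let L be a finitely generated free R-module of rank m, and let f : L → L be an endomorphism. Set r = dim_k((L/f(L)) ⊗_R k) and s = m − r. If the (s+1)-st exterior power of f is zero, then L/f(L) is a free R-module of rank r. -/
/-!
Right exactness of `k ⊗ -` shows that `f ⊗ k` has rank `s`, so there is `η : Rˢ → L` with
`(f ∘ η) ⊗ k` injective. Over a local ring this makes `f ∘ η` a split injection with free
cokernel. A left inverse `l` of `f ∘ η` together with a functional `φ` vanishing on the image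
of `f ∘ η` gives `(φ, l) : L → Rˢ⁺¹`, and the determinant of `(φ, l) ∘ f` on the vectors
`z, η e₁, …, η eₛ` is `φ (f z)`; it vanishes because `⋀ˢ⁺¹ f = 0`. As functionals separate the
points of the free cokernel, `f(L) = f(η(Rˢ))`, so `L / f(L)` is free, of rank
`dim_k (k ⊗ L / f(L)) = r`.
-/

open scoped TensorProduct

theorem ExteriorAlgebra.alternatingMap_comp_eq_zero_of_map_eq_zero {R L L' N : Type*}
    [CommRing R] [AddCommGroup L] [Module R L] [AddCommGroup L'] [Module R L']
    [AddCommGroup N] [Module R N] {n : ℕ} {f : L →ₗ[R] L'}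
    (hf : ∀ x ∈ ⋀[R]^n L, map f x = 0) (g : L' [⋀^Fin n]→ₗ[R] N) (v : Fin n → L) :
    g (f ∘ v) = 0 := by
  classical
  have h := hf _ (ιMulti_range R n ⟨v, rfl⟩)
  rw [map_apply_ιMulti] at h
  simpa using congrArg (liftAlternating (Function.update 0 n g)) h

theorem Matrix.det_of_cons_pi_single_succ {R : Type*} [CommRing R] {n : ℕ}
    (w : Fin (n + 1) → R) : (Matrix.of (Fin.cons w fun i ↦ Pi.single i.succ 1)).det = w 0 := by
  rw [Matrix.det_of_isUpperTriangular]
  · simp [Fin.prod_univ_succ]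
  · intro p q hqp
    cases p using Fin.cases with
    | zero => exact absurd hqp (Fin.not_lt_zero q)
    | succ i => exact Pi.single_eq_of_ne (hqp.ne : q ≠ i.succ) 1

section

variable {R L L' : Type*} [CommRing R] [AddCommGroup L] [Module R L]
  [AddCommGroup L'] [Module R L']

theorem comp_eq_zero_of_map_exteriorPower_eq_zero {s : ℕ} {f : L →ₗ[R] L'}
    (hf : ∀ x ∈ ⋀[R]^(s + 1) L, ExteriorAlgebra.map f x = 0)
    {η : (Fin s → R) →ₗ[R] L} {l : L' →ₗ[R] Fin s → R} (hl : l ∘ₗ f ∘ₗ η = LinearMap.id)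
    {φ : Module.Dual R L'} (hφ : φ ∘ₗ f ∘ₗ η = 0) : φ ∘ₗ f = 0 := by
  ext z
  let Φ : L' →ₗ[R] Fin (s + 1) → R := LinearMap.pi (Fin.cons φ fun i ↦ LinearMap.proj i ∘ₗ l)
  let v : Fin (s + 1) → L := Fin.cons z fun i ↦ η (Pi.single i 1)
  have hrows : (fun p ↦ Φ (f (v p))) = Fin.cons (Φ (f z)) fun i ↦ Pi.single i.succ 1 := by
    ext p j
    cases p using Fin.cases with
    | zero => rfl
    | succ i =>
      cases j using Fin.cases with
      | zero => simpa [Φ, v] using LinearMap.congr_fun hφ (Pi.single i 1)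
      | succ j =>
        simpa [Φ, v, Pi.single_apply] using congr_fun (LinearMap.congr_fun hl (Pi.single i 1)) j
  have hminor := ExteriorAlgebra.alternatingMap_comp_eq_zero_of_map_eq_zero hf
    (Matrix.detRowAlternating.compLinearMap Φ) v
  rw [AlternatingMap.compLinearMap_apply, Function.comp_def, hrows] at hminor
  simpa [Φ] using (Matrix.det_of_cons_pi_single_succ (Φ (f z))).symm.trans hminor

theorem range_eq_range_comp_of_map_exteriorPower_eq_zero {s : ℕ} {f : L →ₗ[R] L'}
    (hf : ∀ x ∈ ⋀[R]^(s + 1) L, ExteriorAlgebra.map f x = 0)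
    {η : (Fin s → R) →ₗ[R] L} {l : L' →ₗ[R] Fin s → R} (hl : l ∘ₗ f ∘ₗ η = LinearMap.id)
    [Module.Projective R (L' ⧸ LinearMap.range (f ∘ₗ η))] :
    LinearMap.range f = LinearMap.range (f ∘ₗ η) := by
  refine le_antisymm ?_ (LinearMap.range_comp_le_range η f)
  rintro _ ⟨z, rfl⟩
  rw [← Submodule.Quotient.mk_eq_zero, ← Module.forall_dual_apply_eq_zero_iff R]
  intro φ
  have hφ : (φ ∘ₗ (LinearMap.range (f ∘ₗ η)).mkQ) ∘ₗ f ∘ₗ η = 0 := by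
    rw [LinearMap.comp_assoc, LinearMap.range_mkQ_comp, LinearMap.comp_zero]
  exact LinearMap.congr_fun (comp_eq_zero_of_map_exteriorPower_eq_zero hf hl hφ) z

theorem exists_injective_lTensor_comp {k : Type*} [Field k] [Algebra R k]
    (hk : Function.Surjective (algebraMap R k)) (f : L →ₗ[R] L') {s : ℕ}
    (hs : s ≤ Module.finrank k (LinearMap.range (f.baseChange k))) :
    ∃ η : (Fin s → R) →ₗ[R] L, Function.Injective ((f ∘ₗ η).lTensor k) := by
  obtain ⟨b, hb⟩ := exists_linearIndependent_of_le_finrank hs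
  have hlift (i : Fin s) : ∃ y : L, f.baseChange k (1 ⊗ₜ y) = b i := by
    obtain ⟨w, hw⟩ := (b i).2
    obtain ⟨y, rfl⟩ := TensorProduct.mk_surjective R L k hk w
    exact ⟨y, hw⟩
  choose y hy using hlift
  refine ⟨Fintype.linearCombination R y, ?_⟩
  rw [← LinearMap.baseChange_eq_ltensor]
  let e := (Pi.basisFun R (Fin s)).baseChange k
  refine LinearMap.injective_of_linearIndependent (v := e) e.span_eq ?_
  have himage : ⇑((f ∘ₗ Fintype.linearCombination R y).baseChange k) ∘ e =
      fun i ↦ (b i : k ⊗[R] L') := by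
    ext i : 1
    rw [Function.comp_apply, Module.Basis.baseChange_apply, LinearMap.baseChange_tmul, ← hy]
    simp
  rw [himage]
  exact hb.map_injOn (Submodule.subtype _) Subtype.val_injective.injOn

theorem finrank_range_baseChange_add_finrank_baseChange_quotient {k : Type*} [Field k]
    [Algebra R k] [Nontrivial R] [Module.Free R L'] [Module.Finite R L'] (f : L →ₗ[R] L') :
    Module.finrank k (LinearMap.range (f.baseChange k)) +
      Module.finrank k (k ⊗[R] (L' ⧸ LinearMap.range f)) = Module.finrank R L' := by
  have hexact : Function.Exact (f.baseChange k) ((LinearMap.range f).mkQ.baseChange k) :=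
    lTensor_exact k f.exact_map_mkQ_range (Submodule.mkQ_surjective _)
  have hsurj : Function.Surjective ((LinearMap.range f).mkQ.baseChange k) :=
    LinearMap.lTensor_surjective k (Submodule.mkQ_surjective _)
  rw [← hexact.linearMap_ker_eq, ← Module.finrank_baseChange (R := k) (M' := L'), add_comm,
    ← LinearMap.finrank_range_add_finrank_ker ((LinearMap.range f).mkQ.baseChange k),
    LinearMap.range_eq_top.2 hsurj, finrank_top]

end

/-- Let `R` be a local ring with residue field `k`, `L` a finitely generated free `R`-module
of rank `m`, and `f : L → L` an endomorphism.  Set `r = dim_k ((L/f(L)) ⊗_R k)` and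
`s = m - r`.  If the `(s+1)`-st exterior power of `f` is zero, then `L/f(L)` is a free
`R`-module of rank `r`. -/
theorem stmt0 (R : Type*) [CommRing R] [IsLocalRing R]
    (L : Type*) [AddCommGroup L] [Module R L] [Module.Free R L] [Module.Finite R L]
    (m r s : ℕ) (f : L →ₗ[R] L)
    (hm : Module.finrank R L = m)
    (hr : Module.finrank (IsLocalRing.ResidueField R)
      (IsLocalRing.ResidueField R ⊗[R] (L ⧸ LinearMap.range f)) = r)
    (hs : s = m - r)
    (hwedge : ∀ x ∈ ⋀[R]^(s + 1) L, ExteriorAlgebra.map f x = 0) :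
    Module.Free R (L ⧸ LinearMap.range f) ∧ Module.finrank R (L ⧸ LinearMap.range f) = r := by
  set k := IsLocalRing.ResidueField R
  have hrank : s ≤ Module.finrank k (LinearMap.range (f.baseChange k)) := by
    have := finrank_range_baseChange_add_finrank_baseChange_quotient (k := k) f
    rw [hr, hm] at this
    omega
  obtain ⟨η, hη⟩ := exists_injective_lTensor_comp IsLocalRing.residue_surjective f hrank
  obtain ⟨l, hl⟩ := (IsLocalRing.split_injective_iff_lTensor_residueField_injective _).2 hη
  have hfree : Module.Free R (L ⧸ LinearMap.range (f ∘ₗ η)) :=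
    Module.free_of_lTensor_residueField_injective _ _ (Submodule.mkQ_surjective _)
      (f ∘ₗ η).exact_map_mkQ_range hη
  have hrange := range_eq_range_comp_of_map_exteriorPower_eq_zero hwedge hl
  have hfree' : Module.Free R (L ⧸ LinearMap.range f) :=
    .of_equiv (Submodule.quotEquivOfEq _ _ hrange).symm
  exact ⟨hfree', by rw [← hr, Module.finrank_baseChange]⟩
end

section
/- Let R be a commutative ring with pR = 0, let n ≥ 1, let L₁,…,Lₙ be rank-1 free R-modules with maps Πᵢ : Lᵢ → L_{i+1} (cyclically) satisfying Πₙ∘⋯∘Π₁ = 0, L = ⊕ Lᵢ, Π the induced degree-one endomorphism. Let v₀, v₁, …, v_{n−1} be 'diagonal' endomorphisms of L (preserving each Lᵢ). Then det(v₀ + v₁Π + v₂Π² + ⋯ + v_{n−1}Π^{n−1}) = det(v₀). -/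
/-!
Choose generators `e i` of the lines `L i`, so that `Π (e (i - 1)) = a i • e i`; the vanishing of
the composite around the cycle says `∏ i, a i = 0`. The `(i, k)` entry of the matrix of
`∑ j, v j Π ^ j` is `v (i - k) i` times the product of the `a`'s along the arc from `k + 1` up
to `i`. In the Leibniz expansion of the determinant, the term of a permutation `σ ≠ 1` contains
the arcs from each `i` up to `σ i`, which together cover the whole cycle, so the term is a
multiple of `∏ i, a i = 0`; only the diagonal term `∏ i, v 0 i` survives.
-/

/-- The degree-one cyclic shift endomorphism of `L = ⊕_{i ∈ ℤ/n} L i` determined by a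
family of maps `P i : L (i-1) → L i`. -/
noncomputable def cyclicShift {R : Type*} [CommRing R] {n : ℕ} {L : ZMod n → Type*}
    [∀ i, AddCommGroup (L i)] [∀ i, Module R (L i)]
    (P : ∀ i : ZMod n, L (i - 1) →ₗ[R] L i) : Module.End R (∀ i, L i) :=
  LinearMap.pi fun i => (P i).comp (LinearMap.proj (i - 1))

/-- The diagonal endomorphism of `L = ⊕_{i ∈ ℤ/n} L i` acting on `L i` by the scalar `w i`. -/
noncomputable def diagEnd {R : Type*} [CommRing R] {n : ℕ} {L : ZMod n → Type*}
    [∀ i, AddCommGroup (L i)] [∀ i, Module R (L i)]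
    (w : ZMod n → R) : Module.End R (∀ i, L i) :=
  LinearMap.pi fun i => w i • LinearMap.proj i

open Finset

namespace ZMod

variable {n : ℕ} [NeZero n]

theorem prod_range_natCast {M : Type*} [CommMonoid M] (g : ZMod n → M) :
    ∏ s ∈ range n, g s = ∏ t, g t :=
  prod_nbij' (fun s => s) val (fun _ _ => mem_univ _) (fun t _ => mem_range.mpr t.val_lt)
    (fun _ hs => val_cast_of_lt (mem_range.mp hs)) (fun t _ => natCast_zmod_val t)
    (fun _ _ => rfl)

/-- The arc product `a i * a (i - 1) * ⋯ * a (k + 1)`. -/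
def arcProd {M : Type*} [CommMonoid M] (a : ZMod n → M) (i k : ZMod n) : M :=
  ∏ s ∈ range (i - k).val, a (i - s)

/-- If no arc from `σ i` down to `i` passed over `t`, the distances `(i - t).val` would grow
along `σ`, yet `σ` preserves their sum. -/
theorem exists_val_sub_lt_of_perm_ne_one {σ : Equiv.Perm (ZMod n)} (hσ : σ ≠ 1) (t : ZMod n) :
    ∃ i, (σ i - t).val < (σ i - i).val := by
  by_contra! hcov
  have hle : ∀ i, (i - t).val ≤ (σ i - t).val := fun i => by
    rw [show i - t = (σ i - t) - (σ i - i) by ring, val_sub (hcov i)]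
    exact Nat.sub_le _ _
  have hsum : ∑ i, (σ i - t).val = ∑ i, (i - t).val := Equiv.sum_comp σ fun i => (i - t).val
  have heq := (sum_eq_sum_iff_of_le fun i _ => hle i).mp hsum.symm
  refine hσ (Equiv.ext fun i => ?_)
  simpa using (val_injective n (heq i (mem_univ i))).symm

theorem prod_dvd_prod_arcProd {M : Type*} [CommMonoid M] (a : ZMod n → M)
    {σ : Equiv.Perm (ZMod n)} (hσ : σ ≠ 1) :
    ∏ t, a t ∣ ∏ i, arcProd a (σ i) i := by
  choose w hw using exists_val_sub_lt_of_perm_ne_one hσ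
  -- `t` is the factor at position `(σ (w t) - t).val` of the arc ending at `σ (w t)`.
  let φ : ZMod n → (Σ _ : ZMod n, ℕ) := fun t => ⟨w t, (σ (w t) - t).val⟩
  have hφ : ∀ t, σ (φ t).1 - ((φ t).2 : ZMod n) = t := fun t => by
    simp [φ]
  have hinj : Set.InjOn φ (univ : Finset (ZMod n)) := fun t _ t' _ h => by
    rw [← hφ t, ← hφ t', h]
  calc ∏ t, a t = ∏ x ∈ univ.image φ, a (σ x.1 - x.2) := by
        rw [prod_image hinj]; simp only [hφ]
    _ ∣ ∏ x ∈ univ.sigma fun i => range (σ i - i).val, a (σ x.1 - x.2) := by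
        refine prod_dvd_prod_of_subset _ _ _ fun x hx => ?_
        obtain ⟨t, -, rfl⟩ := mem_image.mp hx
        exact mem_sigma.mpr ⟨mem_univ _, mem_range.mpr (hw t)⟩
    _ = ∏ i, arcProd a (σ i) i := prod_sigma _ _ _

end ZMod

namespace Matrix

open ZMod

variable {n : ℕ} [NeZero n] {R : Type*} [CommRing R]

def weightedCyclicShift (a : ZMod n → R) : Matrix (ZMod n) (ZMod n) R :=
  of fun i k => if k = i - 1 then a i else 0

theorem weightedCyclicShift_pow_apply (a : ZMod n → R) (j : ℕ) (i k : ZMod n) :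
    (weightedCyclicShift a ^ j) i k = if k = i - j then ∏ s ∈ range j, a (i - s) else 0 := by
  induction j generalizing k with
  | zero => simp [one_apply, eq_comm]
  | succ j ih =>
    rw [pow_succ, mul_apply, sum_eq_single (i - j) (fun l _ hl => by rw [ih, if_neg hl, zero_mul])
      (by simp), ih, if_pos rfl, prod_range_succ]
    simp only [weightedCyclicShift, of_apply, Nat.cast_succ, sub_add_eq_sub_sub, mul_ite,
      mul_zero]

theorem sum_diagonal_mul_weightedCyclicShift_pow_apply (a : ZMod n → R) (v : ℕ → ZMod n → R)
    (i k : ZMod n) :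
    (∑ j ∈ range n, diagonal (v j) * weightedCyclicShift a ^ j) i k
      = v (i - k).val i * arcProd a i k := by
  have hk : ∀ j ∈ range n, k = i - j ↔ j = (i - k).val := fun j hj => by
    constructor
    · rintro rfl
      rw [sub_sub_cancel, val_cast_of_lt (mem_range.mp hj)]
    · rintro rfl
      rw [natCast_zmod_val, sub_sub_cancel]
  simp only [sum_apply, diagonal_mul, weightedCyclicShift_pow_apply, mul_ite, mul_zero]
  rw [sum_congr rfl fun j hj => if_congr (hk j hj) rfl rfl, sum_ite_eq',
    if_pos (mem_range.mpr (val_lt _)), arcProd]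

theorem det_sum_diagonal_mul_weightedCyclicShift_pow {a : ZMod n → R} (ha : ∏ t, a t = 0)
    (v : ℕ → ZMod n → R) :
    (∑ j ∈ range n, diagonal (v j) * weightedCyclicShift a ^ j).det = ∏ i, v 0 i := by
  rw [det_apply, sum_eq_single (1 : Equiv.Perm (ZMod n))]
  · simp [sum_diagonal_mul_weightedCyclicShift_pow_apply, arcProd]
  · intro σ _ hσ
    have hvanish : ∏ i, arcProd a (σ i) i = 0 := zero_dvd_iff.mp (ha ▸ prod_dvd_prod_arcProd a hσ)
    simp only [sum_diagonal_mul_weightedCyclicShift_pow_apply, prod_mul_distrib, hvanish,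
      mul_zero, smul_zero]
  · simp

end Matrix

section

variable {R : Type*} [CommRing R] {ι : Type*} [Fintype ι] {L : ι → Type*}
  [∀ i, AddCommGroup (L i)] [∀ i, Module R (L i)]

noncomputable def piBasisOfUnit (b : ∀ i, Module.Basis Unit R (L i)) :
    Module.Basis ι R (∀ i, L i) :=
  (Pi.basis b).reindex (Equiv.sigmaUnique _ _)

@[simp]
theorem piBasisOfUnit_apply [DecidableEq ι] (b : ∀ i, Module.Basis Unit R (L i)) (i : ι) :
    piBasisOfUnit b i = Pi.single i (b i ()) := by
  simp [piBasisOfUnit]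

@[simp]
theorem piBasisOfUnit_repr (b : ∀ i, Module.Basis Unit R (L i)) (x : ∀ i, L i) (i : ι) :
    (piBasisOfUnit b).repr x i = (b i).repr (x i) () :=
  rfl

end

section

variable {R : Type*} [CommRing R] {n : ℕ} {L : ZMod n → Type*}
  [∀ i, AddCommGroup (L i)] [∀ i, Module R (L i)]

@[simp]
theorem cyclicShift_apply (P : ∀ i : ZMod n, L (i - 1) →ₗ[R] L i) (x : ∀ i, L i) (i : ZMod n) :
    cyclicShift P x i = P i (x (i - 1)) :=
  rfl

@[simp]
theorem diagEnd_apply (w : ZMod n → R) (x : ∀ i, L i) (i : ZMod n) :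
    diagEnd w x i = w i • x i :=
  rfl

theorem toMatrix_diagEnd [NeZero n] (b : ∀ i, Module.Basis Unit R (L i)) (w : ZMod n → R) :
    LinearMap.toMatrix (piBasisOfUnit b) (piBasisOfUnit b) (diagEnd w) = Matrix.diagonal w := by
  ext i k
  rw [LinearMap.toMatrix_apply, piBasisOfUnit_apply, piBasisOfUnit_repr, diagEnd_apply,
    Matrix.diagonal_apply]
  by_cases h : i = k
  · subst h; simp
  · simp [h]

theorem toMatrix_cyclicShift [NeZero n] (b : ∀ i, Module.Basis Unit R (L i))
    (P : ∀ i : ZMod n, L (i - 1) →ₗ[R] L i) :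
    LinearMap.toMatrix (piBasisOfUnit b) (piBasisOfUnit b) (cyclicShift P) =
      Matrix.weightedCyclicShift fun i => (b i).repr (P i (b (i - 1) ())) () := by
  ext i k
  rw [LinearMap.toMatrix_apply, piBasisOfUnit_apply, piBasisOfUnit_repr, cyclicShift_apply,
    Matrix.weightedCyclicShift, Matrix.of_apply]
  by_cases h : k = i - 1
  · subst h; simp
  · simp [h]

end

theorem prod_eq_zero_of_cyclicShift_pow_eq_zero {R : Type*} [CommRing R] {n : ℕ} [NeZero n]
    {L : ZMod n → Type*} [∀ i, AddCommGroup (L i)] [∀ i, Module R (L i)]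
    (b : ∀ i, Module.Basis Unit R (L i)) (P : ∀ i : ZMod n, L (i - 1) →ₗ[R] L i)
    (hcomp : ∀ x : L 0, (cyclicShift P ^ n) (Pi.single (0 : ZMod n) x) = 0) :
    ∏ i, (b i).repr (P i (b (i - 1) ())) () = 0 := by
  set B := piBasisOfUnit b
  have h := congrArg (fun f => f 0 0) (LinearMap.toMatrix_pow B (cyclicShift P) n)
  simp only [toMatrix_cyclicShift, Matrix.weightedCyclicShift_pow_apply, ZMod.natCast_self,
    sub_zero, if_true, LinearMap.toMatrix_apply, B, piBasisOfUnit_apply, hcomp, map_zero,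
    Finsupp.coe_zero, Pi.zero_apply] at h
  rw [← h, ZMod.prod_range_natCast fun t => (b (0 - t)).repr (P (0 - t) (b (0 - t - 1) ())) ()]
  exact ((Equiv.subLeft 0).prod_comp fun t => (b t).repr (P t (b (t - 1) ())) ()).symm

theorem stmt4_general (R : Type*) [CommRing R]
    (n : ℕ) [NeZero n] (L : ZMod n → Type*)
    [∀ i, AddCommGroup (L i)] [∀ i, Module R (L i)]
    [∀ i, Module.Free R (L i)]
    (hrank : ∀ i, Module.finrank R (L i) = 1)
    (P : ∀ i : ZMod n, L (i - 1) →ₗ[R] L i)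
    (hcomp : ∀ x : L 0, (cyclicShift P ^ n) (Pi.single (0 : ZMod n) x) = 0)
    (v : ℕ → ZMod n → R) :
    LinearMap.det (∑ j ∈ Finset.range n, diagEnd (v j) * cyclicShift P ^ j) =
      LinearMap.det (diagEnd (L := L) (v 0)) := by
  obtain hR | hR := subsingleton_or_nontrivial R
  · exact Subsingleton.elim _ _
  let b i : Module.Basis Unit R (L i) := Module.basisUnique Unit (hrank i)
  have ha := prod_eq_zero_of_cyclicShift_pow_eq_zero b P hcomp
  rw [← LinearMap.det_toMatrix (piBasisOfUnit b), ← LinearMap.det_toMatrix (piBasisOfUnit b)]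
  simp only [map_sum, LinearMap.toMatrix_mul, ← LinearMap.toMatrix_pow, toMatrix_diagEnd,
    toMatrix_cyclicShift]
  rw [Matrix.det_sum_diagonal_mul_weightedCyclicShift_pow ha, Matrix.det_diagonal]

/-- Let `R` be a commutative ring with `pR = 0`, `L₁, …, Lₙ` rank-one free `R`-modules with
cyclic maps `Πᵢ : Lᵢ → L_{i+1}` whose composite around the cycle vanishes, `Π` the induced
degree-one endomorphism of `L = ⊕ᵢ Lᵢ`, and `v₀, …, v_{n-1}` diagonal endomorphisms of `L`.
Then `det (v₀ + v₁Π + ⋯ + v_{n-1}Π^{n-1}) = det v₀`. -/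
theorem stmt4 (p : ℕ) (hp : p.Prime) (R : Type*) [CommRing R] (hchar : (p : R) = 0)
    (n : ℕ) [NeZero n] (L : ZMod n → Type*)
    [∀ i, AddCommGroup (L i)] [∀ i, Module R (L i)]
    [∀ i, Module.Free R (L i)] [∀ i, Module.Finite R (L i)]
    (hrank : ∀ i, Module.finrank R (L i) = 1)
    (P : ∀ i : ZMod n, L (i - 1) →ₗ[R] L i)
    (hcomp : ∀ x : L 0, (cyclicShift P ^ n) (Pi.single (0 : ZMod n) x) = 0)
    (v : ℕ → ZMod n → R) :
    LinearMap.det (∑ j ∈ Finset.range n, diagEnd (v j) * cyclicShift P ^ j) =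
      LinearMap.det (diagEnd (L := L) (v 0)) :=
  stmt4_general R n L hrank P hcomp v
end

section
/- Let R be a commutative local ring in which every element of the maximal ideal is nilpotent, let W be a finite free R-module, and let N ⊆ W be a free submodule which is a direct summand as R-module. Then any free submodule of W of finite rank contained in W is a direct summand if its image modulo the maximal ideal is a direct summand; in particular, if f : W → W has kernel a direct summand of rank r, then Coker f is free of rank r. -/
open IsLocalRing TensorProduct

section Aux

set_option linter.unusedSectionVars false
variable {R : Type*} [CommRing R] [IsLocalRing R]
  {W : Type*} [AddCommGroup W] [Module R W] [Module.Free R W] [Module.Finite R W]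

/-- over a local ring with nil maximal ideal, 𝔪W ∩ N ⊆ 𝔪N for free N. -/
theorem aux_mem_smul (hnil : ∀ x ∈ maximalIdeal R, IsNilpotent x)
    (N : Submodule R W) [Module.Free R N] [Module.Finite R N]
    (x : N) (hx : (x : W) ∈ (maximalIdeal R • ⊤ : Submodule R W)) :
    x ∈ (maximalIdeal R • ⊤ : Submodule R N) := by
  classical
  set b := Module.Free.chooseBasis R N with hb
  have hcoeff : ∀ i, b.repr x i ∈ maximalIdeal R := by
    by_contra hcon
    push_neg at hcon
    obtain ⟨j, hj⟩ := hcon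
    have hju : IsUnit (b.repr x j) := by
      by_contra h
      exact hj (h : b.repr x j ∈ nonunits R)
    -- annihilator of x is trivial
    have hann : ∀ c : R, c • (x : W) = 0 → c = 0 := by
      intro c hc
      have hcx : c • x = 0 := by
        apply Subtype.coe_injective
        simpa using hc
      have := congrArg (fun y => b.repr y j) hcx
      simp only [map_smul, Finsupp.smul_apply, smul_eq_mul, map_zero,
        Finsupp.coe_zero, Pi.zero_apply] at this
      have h0 : c * b.repr x j = 0 * b.repr x j := by simpa using this
      exact hju.mul_right_cancel h0
    -- find a f.g. nilpotent ideal containing the coefficients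
    have hfg : ∃ I : Ideal R, I.FG ∧ I ≤ maximalIdeal R ∧
        (x : W) ∈ I • (⊤ : Submodule R W) := by
      refine Submodule.smul_induction_on hx ?_ ?_
      · intro r hr w _
        exact ⟨Ideal.span {r}, ⟨{r}, by simp⟩,
          Ideal.span_le.mpr (by simpa using hr),
          Submodule.smul_mem_smul (Ideal.subset_span rfl) trivial⟩
      · rintro y z ⟨I, hI, hIm, hy⟩ ⟨J, hJ, hJm, hz⟩
        exact ⟨I ⊔ J, Submodule.FG.sup hI hJ, sup_le hIm hJm,
          add_mem (Submodule.smul_mono_left le_sup_left hy)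
            (Submodule.smul_mono_left le_sup_right hz)⟩
    obtain ⟨I, hIfg, hIm, hxI⟩ := hfg
    have hrad : I ≤ (⊥ : Ideal R).radical := by
      intro c hc
      exact (mem_nilradical).mpr (hnil c (hIm hc))
    obtain ⟨n, hn⟩ := Ideal.exists_pow_le_of_le_radical_of_fg hrad hIfg
    have hbot : I ^ n = ⊥ := le_bot_iff.mp hn
    have main : ∀ m : ℕ, I ^ m = ⊥ → (x : W) = 0 := by
      intro m
      induction m with
      | zero =>
        intro h
        rw [pow_zero, Ideal.one_eq_top] at h
        exact absurd (h ▸ Submodule.mem_top (x := (1 : R)))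
          (by simp)
      | succ m ih =>
        intro h
        apply ih
        rw [eq_bot_iff]
        intro c hc
        have hmem : c • (x : W) ∈ (I ^ m • (I • (⊤ : Submodule R W))) :=
          Submodule.smul_mem_smul hc hxI
        rw [← Submodule.smul_assoc, smul_eq_mul, ← pow_succ, h,
          Submodule.bot_smul, Submodule.mem_bot] at hmem
        simpa using hann c hmem
    have hx0 : (x : W) = 0 := main n hbot
    have : x = 0 := Subtype.coe_injective (by simpa using hx0)
    rw [this] at hju
    simp at hju
  -- now x is a combination with coefficients in 𝔪
  have hxsum := b.sum_repr x
  rw [← hxsum]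
  exact Submodule.sum_mem _ fun i _ => Submodule.smul_mem_smul (hcoeff i) trivial

theorem aux_summand (hnil : ∀ x ∈ maximalIdeal R, IsNilpotent x)
    (N : Submodule R W) [Module.Free R N] [Module.Finite R N] :
    ∃ C, IsCompl N C := by
  classical
  have hle : (maximalIdeal R • ⊤ : Submodule R N) ≤
      (maximalIdeal R • ⊤ : Submodule R W).comap N.subtype := by
    rw [← Submodule.map_le_iff_le_comap, Submodule.map_smul'']
    exact Submodule.smul_mono le_rfl le_top
  set q : (N ⧸ (maximalIdeal R • ⊤ : Submodule R N)) →ₗ[R]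
      (W ⧸ (maximalIdeal R • ⊤ : Submodule R W)) :=
    Submodule.mapQ _ _ N.subtype hle with hq
  have hqinj : Function.Injective q := by
    rw [← LinearMap.ker_eq_bot, eq_bot_iff]
    intro z hz
    obtain ⟨y, rfl⟩ := Submodule.Quotient.mk_surjective _ z
    rw [LinearMap.mem_ker, hq, Submodule.mapQ_apply, Submodule.Quotient.mk_eq_zero] at hz
    rw [Submodule.mem_bot, Submodule.Quotient.mk_eq_zero]
    exact aux_mem_smul hnil N y hz
  have hcomm : ∀ z : (R ⧸ maximalIdeal R) ⊗[R] N,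
      (TensorProduct.quotTensorEquivQuotSMul W (maximalIdeal R))
        ((N.subtype.lTensor (R ⧸ maximalIdeal R)) z) =
      q ((TensorProduct.quotTensorEquivQuotSMul N (maximalIdeal R)) z) := by
    intro z
    induction z using TensorProduct.induction_on with
    | zero => simp
    | tmul c n =>
      obtain ⟨r, rfl⟩ := Ideal.Quotient.mk_surjective c
      simp [hq, TensorProduct.quotTensorEquivQuotSMul_mk_tmul, Submodule.mapQ_apply]
    | add a b ha hb => simp [map_add, ha, hb]
  have hinj : Function.Injective (N.subtype.lTensor (R ⧸ maximalIdeal R)) := by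
    intro z₁ z₂ h
    apply (TensorProduct.quotTensorEquivQuotSMul N (maximalIdeal R)).injective
    apply hqinj
    rw [← hcomm, ← hcomm, h]
  obtain ⟨l', hl'⟩ :=
    (IsLocalRing.split_injective_iff_lTensor_residueField_injective N.subtype).mpr hinj
  exact ⟨LinearMap.ker l',
    LinearMap.isCompl_of_proj fun x => LinearMap.ext_iff.mp hl' x⟩

/-- direct summands of finite free modules over local rings are finite free -/
theorem aux_summand_free (p q : Submodule R W) (h : IsCompl p q) :
    Module.Finite R q ∧ Module.Free R q := by
  have hproj : ∀ c : q, (Submodule.linearProjOfIsCompl q p h.symm) (c : W) = c :=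
    fun c => Submodule.linearProjOfIsCompl_apply_left h.symm c
  have hsurj : Function.Surjective (Submodule.linearProjOfIsCompl q p h.symm) :=
    fun c => ⟨(c : W), hproj c⟩
  haveI : Module.Finite R q := Module.Finite.of_surjective _ hsurj
  haveI : Module.Projective R q :=
    Module.Projective.of_split q.subtype (Submodule.linearProjOfIsCompl q p h.symm)
      (by ext c; simp [hproj])
  haveI : Module.FinitePresentation R q := Module.finitePresentation_of_projective R q
  exact ⟨inferInstance, Module.free_of_flat_of_isLocalRing⟩

end Aux

/-- Let `R` be a local ring in which every element of the maximal ideal is nilpotent, and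
`W` a finite free `R`-module.  Then any finite free submodule of `W` is a direct summand
provided its image modulo the maximal ideal is a direct summand; in particular, if
`f : W → W` has kernel a direct summand which is free of rank `r`, then `Coker f` is free
of rank `r`. -/
theorem stmt7 (R : Type*) [CommRing R] [IsLocalRing R]
    (hnil : ∀ x ∈ IsLocalRing.maximalIdeal R, IsNilpotent x)
    (W : Type*) [AddCommGroup W] [Module R W] [Module.Free R W] [Module.Finite R W]
    (r : ℕ) :
    (∀ N : Submodule R W, Module.Free R N → Module.Finite R N →
      (∃ C, IsCompl
        (N.map (IsLocalRing.maximalIdeal R • (⊤ : Submodule R W)).mkQ) C) →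
      ∃ C, IsCompl N C) ∧
    (∀ f : W →ₗ[R] W, Module.Free R (LinearMap.ker f) →
      Module.finrank R (LinearMap.ker f) = r →
      (∃ C, IsCompl (LinearMap.ker f) C) →
      Module.Free R (W ⧸ LinearMap.range f) ∧
        Module.finrank R (W ⧸ LinearMap.range f) = r) := by
  constructor
  · intro N hfree hfin _
    exact aux_summand hnil N
  · intro f hkfree hkrank ⟨C, hC⟩
    haveI := hkfree
    obtain ⟨hCfin, hCfree⟩ := aux_summand_free _ _ hC
    obtain ⟨hKfin, _⟩ := aux_summand_free _ _ hC.symm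
    -- range f ≃ W ⧸ ker f ≃ C
    have eC : (W ⧸ LinearMap.ker f) ≃ₗ[R] C :=
      Submodule.quotientEquivOfIsCompl _ _ hC
    have eR : (LinearMap.range f) ≃ₗ[R] C :=
      (f.quotKerEquivRange).symm.trans eC
    haveI : Module.Free R (LinearMap.range f) := Module.Free.of_equiv eR.symm
    haveI : Module.Finite R (LinearMap.range f) := Module.Finite.equiv eR.symm
    obtain ⟨D, hD⟩ := aux_summand hnil (LinearMap.range f)
    obtain ⟨hDfin, hDfree⟩ := aux_summand_free _ _ hD
    have eQ : (W ⧸ LinearMap.range f) ≃ₗ[R] D :=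
      Submodule.quotientEquivOfIsCompl _ _ hD
    haveI : Module.Free R (W ⧸ LinearMap.range f) := Module.Free.of_equiv eQ.symm
    refine ⟨inferInstance, ?_⟩
    -- rank computation
    have h1 : Module.finrank R W =
        Module.finrank R (LinearMap.ker f) + Module.finrank R C := by
      rw [← Module.finrank_prod]
      exact (Submodule.prodEquivOfIsCompl _ _ hC).finrank_eq.symm
    have h2 : Module.finrank R W =
        Module.finrank R (LinearMap.range f) + Module.finrank R D := by
      rw [← Module.finrank_prod]
      exact (Submodule.prodEquivOfIsCompl _ _ hD).finrank_eq.symm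
    have h3 : Module.finrank R (LinearMap.range f) = Module.finrank R C :=
      eR.finrank_eq
    have h4 : Module.finrank R (W ⧸ LinearMap.range f) = Module.finrank R D :=
      eQ.finrank_eq
    rw [h4]
    omega
end

section
/- Let k be a perfect field and M a finite free W(k)-module with a cyclic Z/n-grading, an injective degree-one W(k)-linear operator Π, and an injective σ^{-1}-linear degree-(−1) operator V commuting with Π. Suppose for every graded index the induced map of V on Coker(Π : M_{j} → M_{j+1}) is bijective. Then Π induces a bijection on Lie = M/VM in each degree; hence if Π is required to be topologically nilpotent on M/VM, such a configuration is impossible (V must induce zero on some cokernel of Π). -/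
/-!
Exactness of `V` on the cokernels of `Π` transfers to exactness of `Π` on the cokernels of `V`
after a shift of degree, because `Π` is injective and commutes with `V`. Summing the
surjectivity over all degrees gives `M = VM + ΠM`; applying `Π` repeatedly and using that `Π`
preserves `VM` yields `M = VM + Πᴺ M` for every `N`, so nilpotence of `Π` on `M / VM`
forces `VM = M`.
-/

open Submodule LinearMap

theorem sup_range_pow_eq_top_of_sup_range_eq_top {R M : Type*} [Semiring R] [AddCommMonoid M]
    [Module R M] {σ : R →+* R} [RingHomSurjective σ]
    {V : M →ₛₗ[σ] M} {f : Module.End R M}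
    (hcomm : Function.Commute f V) (htop : range V ⊔ range f = ⊤) (m : ℕ) :
    range V ⊔ range (f ^ m) = ⊤ := by
  induction m with
  | zero => simp [Module.End.one_eq_id, range_id]
  | succ m ih =>
    have hV : (range V).map (f ^ m) ≤ range V := by
      rintro _ ⟨_, ⟨x, rfl⟩, rfl⟩
      exact ⟨(f ^ m) x, by rw [Module.End.coe_pow, (hcomm.iterate_left m) x]⟩
    have hfm : range (f ^ m) ≤ range V ⊔ range (f ^ (m + 1)) :=
      calc range (f ^ m) = (range V ⊔ range f).map (f ^ m) := by rw [htop, Submodule.map_top]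
        _ = (range V).map (f ^ m) ⊔ range (f ^ (m + 1)) := by
          rw [Submodule.map_sup, pow_succ, Module.End.mul_eq_comp, range_comp]
        _ ≤ range V ⊔ range (f ^ (m + 1)) := sup_le_sup_right hV _
    rw [eq_top_iff, ← ih]
    exact sup_le le_sup_left hfm

theorem stmt13_general (p : ℕ) [Fact p.Prime] (k : Type*) [Field k] [CharP k p] [PerfectRing k p]
    (n : ℕ)
    (M : Type*) [AddCommGroup M] [Module (WittVector p k) M]
    (V : M →ₛₗ[((WittVector.frobeniusEquiv p k).symm :
        WittVector p k →+* WittVector p k)] M)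
    (Pim : Module.End (WittVector p k) M) (hPiminj : Function.Injective Pim)
    (hcomm : ∀ x : M, Pim (V x) = V (Pim x))
    (Mj : ZMod n → Submodule (WittVector p k) M)
    (hinternal : DirectSum.IsInternal Mj)
    (hVbij : ∀ j : ZMod n,
      (Mj j ≤ Submodule.map V (Mj (j + 1)) ⊔ Submodule.map Pim (Mj (j - 1))) ∧
      (∀ x ∈ Mj (j + 1), V x ∈ Submodule.map Pim (Mj (j - 1)) →
        x ∈ Submodule.map Pim (Mj j))) :
    (∀ j : ZMod n,
      (Mj (j + 1) ≤ Submodule.map Pim (Mj j) ⊔ Submodule.map V (Mj (j + 2))) ∧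
      (∀ x ∈ Mj j, Pim x ∈ Submodule.map V (Mj (j + 2)) →
        x ∈ Submodule.map V (Mj (j + 1)))) ∧
    ((∃ N : ℕ, ∀ x : M, (Pim ^ N) x ∈ LinearMap.range V) →
      LinearMap.range V = ⊤) := by
  have hshift (j : ZMod n) : j + 1 + 1 = j + 2 := by rw [add_assoc, one_add_one_eq_two]
  refine ⟨fun j => ⟨?_, ?_⟩, ?_⟩
  · simpa only [hshift, add_sub_cancel_right, sup_comm] using (hVbij (j + 1)).1
  · rintro x hx ⟨y, hy, hVy⟩
    obtain ⟨z, hz, hPz⟩ := (hVbij (j + 1)).2 y (by rwa [hshift])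
      ⟨x, by rwa [add_sub_cancel_right], hVy.symm⟩
    exact ⟨z, hz, hPiminj (by rw [hcomm, hPz, hVy])⟩
  · rintro ⟨N, hN⟩
    have htop : range V ⊔ range Pim = ⊤ := by
      rw [eq_top_iff, ← hinternal.submodule_iSup_eq_top]
      exact iSup_le fun j => (hVbij j).1.trans (sup_le_sup map_le_range map_le_range)
    have hN' : range (Pim ^ N) ≤ range V := by
      rintro _ ⟨x, rfl⟩
      exact hN x
    simpa only [sup_of_le_left hN'] using
      sup_range_pow_eq_top_of_sup_range_eq_top hcomm htop N

/-- Let `k` be a perfect field, `M` a finite free `W(k)`-module with a cyclic `ℤ/n`-grading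
`M = ⊕_j M_j`, an injective degree-one linear operator `Π`, and an injective
`σ⁻¹`-semilinear degree-`(-1)` operator `V` commuting with `Π`.  Suppose that for every
graded index `j` the map induced by `V` on `Coker (Π : M_j → M_{j+1})` is bijective, i.e.
`M_j = V(M_{j+1}) + Π(M_{j-1})` (surjectivity) and `V x ∈ Π(M_{j-1}) → x ∈ Π(M_j)` for
`x ∈ M_{j+1}` (injectivity).  Then `Π` induces a bijection on `Lie = M/VM` in each degree;
hence if `Π` is moreover (topologically) nilpotent on `M/VM`, such a configuration forces
`VM = M`, which is impossible for a nonzero Lie algebra: `V` must induce zero on some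
cokernel of `Π`. -/
theorem stmt13 (p : ℕ) [Fact p.Prime] (k : Type*) [Field k] [CharP k p] [PerfectRing k p]
    (n : ℕ) [NeZero n]
    (M : Type*) [AddCommGroup M] [Module (WittVector p k) M]
    [Module.Free (WittVector p k) M] [Module.Finite (WittVector p k) M]
    (V : M →ₛₗ[((WittVector.frobeniusEquiv p k).symm :
        WittVector p k →+* WittVector p k)] M)
    (hVinj : Function.Injective V)
    (Pim : Module.End (WittVector p k) M) (hPiminj : Function.Injective Pim)
    (hcomm : ∀ x : M, Pim (V x) = V (Pim x))
    (Mj : ZMod n → Submodule (WittVector p k) M)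
    (hinternal : DirectSum.IsInternal Mj)
    (hVdeg : ∀ j : ZMod n, ∀ x ∈ Mj (j + 1), V x ∈ Mj j)
    (hPimdeg : ∀ j : ZMod n, ∀ x ∈ Mj j, Pim x ∈ Mj (j + 1))
    (hVbij : ∀ j : ZMod n,
      (Mj j ≤ Submodule.map V (Mj (j + 1)) ⊔ Submodule.map Pim (Mj (j - 1))) ∧
      (∀ x ∈ Mj (j + 1), V x ∈ Submodule.map Pim (Mj (j - 1)) →
        x ∈ Submodule.map Pim (Mj j))) :
    (∀ j : ZMod n,
      (Mj (j + 1) ≤ Submodule.map Pim (Mj j) ⊔ Submodule.map V (Mj (j + 2))) ∧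
      (∀ x ∈ Mj j, Pim x ∈ Submodule.map V (Mj (j + 2)) →
        x ∈ Submodule.map V (Mj (j + 1)))) ∧
    ((∃ N : ℕ, ∀ x : M, (Pim ^ N) x ∈ LinearMap.range V) →
      LinearMap.range V = ⊤) :=
  stmt13_general p k n M V Pim hPiminj hcomm Mj hinternal hVbij
end
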